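/- Suppose two counters i and j each count upward at rate between φ and φρ (for reals φ > 0, ρ ≥ 1), both are restarted from 0 at respective times s_i, s_j with |s_i − s_j| ≤ Σ, and each counter is capped at m − 1 (it halts upon reaching m − 1), where m ≤ φT⁻ and both counters run for at most time T⁻ before the next restart. Then at any common time t before either counter is restarted again, the counter values v_i(t) = min(m − 1, ⌊φ·r_i·(t − s_i)⌋) with r_i ∈ [1, ρ]... satisfy |v_i(t) − v_j(t)| ≤ ⌈φρΣ + (1 − 1/ρ)m⌉. -/

import Mathlib

/-!
Write `x = φ rᵢ (t - sᵢ)` and `y = φ rⱼ (t - sⱼ)` for the uncapped counts. As the rates lie in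
`[1, ρ]`, `x / ρ ≤ φ (t - sᵢ) ≤ φ (t - sⱼ) + φ Σ ≤ y + φ ρ Σ`. The cap turns this multiplicative
comparison into an additive one, because `min (m - 1) x ≤ (1 - 1/ρ) m + x / ρ`. Hence the capped
counts differ by at most `φ ρ Σ + (1 - 1/ρ) m`, and taking floors costs at most rounding this up.
-/

section

variable {K : Type*} [Field K] [LinearOrder K] [IsStrictOrderedRing K]

theorem min_le_add_mul_of_mem_Icc (m x κ : K) (hκ : κ ∈ Set.Icc 0 1) :
    min (m - 1) x ≤ (1 - κ) * m + κ * x := by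
  obtain ⟨hκ0, hκ1⟩ := hκ
  rcases le_total x (m - 1) with hx | hx
  · rw [min_eq_right hx]
    nlinarith
  · rw [min_eq_left hx]
    nlinarith

theorem min_sub_min_le_of_div_sub_le {m ρ x y c : K} (hm : 0 ≤ m) (hρ : 1 ≤ ρ) (hc : 0 ≤ c)
    (h : x / ρ - y ≤ c) : min (m - 1) x - min (m - 1) y ≤ c + (1 - 1 / ρ) * m := by
  have hκ : 1 / ρ ∈ Set.Icc 0 1 := ⟨by positivity, div_le_one_of_le₀ hρ (by positivity)⟩
  have hgap : 0 ≤ (1 - 1 / ρ) * m := mul_nonneg (sub_nonneg.mpr hκ.2) hm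
  rcases le_total (m - 1) y with hy | hy
  · rw [min_eq_left hy]
    linarith [min_le_left (m - 1) x]
  · rw [min_eq_right hy]
    have := min_le_add_mul_of_mem_Icc m x (1 / ρ) hκ
    rw [one_div_mul_eq_div] at this
    linarith

theorem rate_mul_elapsed_div_sub_le {φ ρ S si sj ri rj t : K} (hφ : 0 ≤ φ) (hρ : 1 ≤ ρ)
    (hS : 0 ≤ S) (hskew : sj - si ≤ S) (hri : ri ∈ Set.Icc 1 ρ) (hrj : rj ∈ Set.Icc 1 ρ)
    (hti : si ≤ t) (htj : sj ≤ t) :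
    φ * ri * (t - si) / ρ - φ * rj * (t - sj) ≤ φ * ρ * S := by
  have hρ0 : 0 < ρ := zero_lt_one.trans_le hρ
  have hslow : φ * ri * (t - si) / ρ ≤ φ * (t - si) := by
    rw [div_le_iff₀ hρ0]
    have := mul_le_mul_of_nonneg_left hri.2 (mul_nonneg hφ (sub_nonneg.mpr hti))
    nlinarith
  have hfast : φ * (t - sj) ≤ φ * rj * (t - sj) := by
    have := mul_le_mul_of_nonneg_left hrj.1 (mul_nonneg hφ (sub_nonneg.mpr htj))
    nlinarith
  have hS' : φ * S ≤ φ * ρ * S := by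
    have := mul_le_mul_of_nonneg_left hρ (mul_nonneg hφ hS)
    nlinarith
  nlinarith [mul_le_mul_of_nonneg_left hskew hφ]

variable [FloorRing K]

theorem Int.floor_sub_floor_le_ceil_sub (x y : K) : ⌊x⌋ - ⌊y⌋ ≤ ⌈x - y⌉ := by
  rw [← Int.lt_add_one_iff, ← Int.cast_lt (R := K)]
  push_cast
  linarith [Int.floor_le x, Int.lt_floor_add_one y, Int.le_ceil (x - y)]

theorem Int.min_floor (M : ℤ) (x : K) : min M ⌊x⌋ = ⌊min (M : K) x⌋ := by
  rw [Int.floor_mono.map_min, Int.floor_intCast]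

theorem min_floor_sub_min_floor_le {m : ℕ} {ρ x y c : K} (hρ : 1 ≤ ρ) (hc : 0 ≤ c)
    (h : x / ρ - y ≤ c) :
    min ((m : ℤ) - 1) ⌊x⌋ - min ((m : ℤ) - 1) ⌊y⌋ ≤ ⌈c + (1 - 1 / ρ) * m⌉ := by
  rw [Int.min_floor, Int.min_floor]
  push_cast
  exact (Int.floor_sub_floor_le_ceil_sub _ _).trans
    (Int.ceil_mono (min_sub_min_le_of_div_sub_le m.cast_nonneg hρ hc h))

end

theorem counter_skew_bound_general (phi rho S si sj ri rj t : ℝ) (m : ℕ)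
    (hphi : 0 < phi) (hrho : 1 ≤ rho) (hS : 0 ≤ S)
    (hskew : |si - sj| ≤ S)
    (hri : ri ∈ Set.Icc 1 rho) (hrj : rj ∈ Set.Icc 1 rho)
    (hti : si ≤ t) (htj : sj ≤ t) :
    |min ((m : ℤ) - 1) ⌊phi * ri * (t - si)⌋ -
      min ((m : ℤ) - 1) ⌊phi * rj * (t - sj)⌋|
      ≤ ⌈phi * rho * S + (1 - 1 / rho) * m⌉ := by
  obtain ⟨hji, hij⟩ := abs_sub_le_iff.mp hskew
  have hslack : 0 ≤ phi * rho * S := by positivity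
  rw [abs_sub_le_iff]
  exact ⟨min_floor_sub_min_floor_le hrho hslack
      (rate_mul_elapsed_div_sub_le hphi.le hrho hS hij hri hrj hti htj),
    min_floor_sub_min_floor_le hrho hslack
      (rate_mul_elapsed_div_sub_le hphi.le hrho hS hji hrj hri htj hti)⟩

theorem counter_skew_bound (phi rho S T' si sj ri rj t : ℝ) (m : ℕ)
    (hphi : 0 < phi) (hrho : 1 ≤ rho) (hS : 0 ≤ S) (hm : 1 ≤ m)
    (hskew : |si - sj| ≤ S) (hcap : (m : ℝ) ≤ phi * T')
    (hri : ri ∈ Set.Icc 1 rho) (hrj : rj ∈ Set.Icc 1 rho)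
    (hti : si ≤ t) (htj : sj ≤ t) :
    |min ((m : ℤ) - 1) ⌊phi * ri * (t - si)⌋ -
      min ((m : ℤ) - 1) ⌊phi * rj * (t - sj)⌋|
      ≤ ⌈phi * rho * S + (1 - 1 / rho) * m⌉ :=
  counter_skew_bound_general phi rho S si sj ri rj t m hphi hrho hS hskew hri hrj hti htj
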